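/- Let ∇ be the E₀-connection on E₀ defined on generators by ∇_{X_j^i} X_l^k = 2x^k δ_j^k X_l^i and extended by the Koszul rules (A-linear in the first argument, ∇_X(f·Y) = ρ(X)(f)·Y + f·∇_X Y). Then ∇ is torsion-free with respect to [·,·]_{E₀}, and its curvature R satisfies, on generators: R(X₁¹, X₁²)X₁¹ = −2𝒳₁, R(X₁¹, X₁²)X₂¹ = −2𝒳₂, R(X₂², X₂¹)X₁² = 2𝒳₁, R(X₂², X₂¹)X₂² = 2𝒳₂, together with the values forced by skew-symmetry of R in its first two arguments, while all other components R(X_j^i, X_l^k)X_n^m on generators vanish. -/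

import Mathlib

noncomputable section

set_option maxHeartbeats 1000000
set_option synthInstance.maxHeartbeats 400000

open Matrix

/-- The ℝ-algebra of smooth (C^∞) functions on ℝ². -/
def Sm : Subalgebra ℝ ((ℝ × ℝ) → ℝ) where
  carrier := {f | ContDiff ℝ (⊤ : ℕ∞) f}
  mul_mem' := fun {a b} (hf : ContDiff ℝ (⊤ : ℕ∞) a) (hg : ContDiff ℝ (⊤ : ℕ∞) b) => hf.mul hg
  add_mem' := fun {a b} (hf : ContDiff ℝ (⊤ : ℕ∞) a) (hg : ContDiff ℝ (⊤ : ℕ∞) b) => hf.add hg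
  algebraMap_mem' r :=
    show ContDiff ℝ (⊤ : ℕ∞) (algebraMap ℝ ((ℝ × ℝ) → ℝ) r) from contDiff_const

/-- Smooth functions on the plane. -/
abbrev S : Type := Sm

lemma mem_Sm_iff {f : (ℝ × ℝ) → ℝ} : f ∈ Sm ↔ ContDiff ℝ (⊤ : ℕ∞) f := by
  rw [Sm]; rfl

lemma smooth_coe (f : S) : ContDiff ℝ (⊤ : ℕ∞) (f : (ℝ × ℝ) → ℝ) := mem_Sm_iff.mp f.2

/-- Sections of the trivial bundle `ℝ² × M₂(ℝ)`, as 2×2 matrices of smooth functions. -/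
abbrev E₀ : Type := Matrix (Fin 2) (Fin 2) S

/-- The section `X_j^i`: the constant elementary matrix with 1 in entry (i,j). -/
def sb (i j : Fin 2) : E₀ := Matrix.single i j 1

/-- First coordinate function. -/
def x₁ : S := ⟨fun p => p.1, mem_Sm_iff.mpr contDiff_fst⟩
/-- Second coordinate function. -/
def x₂ : S := ⟨fun p => p.2, mem_Sm_iff.mpr contDiff_snd⟩
/-- Coordinates. -/
def xc : Fin 2 → S := ![x₁, x₂]

/-- Directional derivative of a smooth function, in direction `v`. -/
def pdAux (v : ℝ × ℝ) (f : S) : S :=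
  ⟨fun p => fderiv ℝ (f : (ℝ × ℝ) → ℝ) p v,
    mem_Sm_iff.mpr (((smooth_coe f).fderiv_right (le_refl _)).clm_apply contDiff_const)⟩

/-- The vector field (derivation) `∂/∂v` on `ℝ²`. -/
def pd (v : ℝ × ℝ) : Derivation ℝ S S where
  toFun := pdAux v
  map_add' f g := by
    ext p
    have hf : DifferentiableAt ℝ (f : (ℝ × ℝ) → ℝ) p :=
      ((smooth_coe f).differentiable (by simp)).differentiableAt
    have hg : DifferentiableAt ℝ (g : (ℝ × ℝ) → ℝ) p :=
      ((smooth_coe g).differentiable (by simp)).differentiableAt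
    have h1 : ((f + g : S) : (ℝ × ℝ) → ℝ) = fun q => (f : (ℝ × ℝ) → ℝ) q + (g : (ℝ × ℝ) → ℝ) q := rfl
    simp only [pdAux, h1, AddMemClass.coe_add, Pi.add_apply]
    rw [fderiv_fun_add hf hg]
    simp
  map_smul' c f := by
    ext p
    have h1 : ((c • f : S) : (ℝ × ℝ) → ℝ) = fun q => c * (f : (ℝ × ℝ) → ℝ) q := rfl
    have hf : DifferentiableAt ℝ (f : (ℝ × ℝ) → ℝ) p :=
      ((smooth_coe f).differentiable (by simp)).differentiableAt
    simp only [pdAux]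
    rw [h1, fderiv_const_mul hf]
    simp
  map_one_eq_zero' := by
    ext p
    have h1 : ((1 : S) : (ℝ × ℝ) → ℝ) = fun _ => (1 : ℝ) := rfl
    have h2 : fderiv ℝ (1 : (ℝ × ℝ) → ℝ) p = 0 := fderiv_const_apply 1
    simp [pdAux, h1, h2]
  leibniz' f g := by
    ext p
    have hf : DifferentiableAt ℝ (f : (ℝ × ℝ) → ℝ) p :=
      ((smooth_coe f).differentiable (by simp)).differentiableAt
    have hg : DifferentiableAt ℝ (g : (ℝ × ℝ) → ℝ) p :=
      ((smooth_coe g).differentiable (by simp)).differentiableAt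
    have h1 : ((f * g : S) : (ℝ × ℝ) → ℝ) = fun q => (f : (ℝ × ℝ) → ℝ) q * (g : (ℝ × ℝ) → ℝ) q := rfl
    simp [pdAux, h1, fderiv_fun_mul hf hg]
    try ring

/-- Standard basis vectors of ℝ². -/
def ev : Fin 2 → ℝ × ℝ := ![(1, 0), (0, 1)]

/-- The anchor `ρ` of `E₀`: `ρ(X_j^i) = (x^i)² ∂/∂x^j`, extended `C^∞(ℝ²)`-linearly. -/
def anchor (X : E₀) : Derivation ℝ S S :=
  ∑ i : Fin 2, ∑ j : Fin 2, (X i j * xc i ^ 2) • pd (ev j)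

/-- The section `𝒳₁ = (x²)² X₁¹ − (x¹)² X₁²`. -/
def 𝓧₁ : E₀ := x₂ ^ 2 • sb 0 0 - x₁ ^ 2 • sb 1 0
/-- The section `𝒳₂ = (x²)² X₂¹ − (x¹)² X₂²`. -/
def 𝓧₂ : E₀ := x₂ ^ 2 • sb 0 1 - x₁ ^ 2 • sb 1 1

/-- The almost Lie bracket axioms for `(E₀, ρ)`, together with the defining values
`[X_j^i, X_l^k] = 2x^k δ_j^k X_l^i − 2x^i δ_l^i X_j^k` on the generators: ℝ-bilinearity,
skew-symmetry, the Leibniz rule, and the values on generators. -/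
def IsBracket (L : E₀ → E₀ → E₀) : Prop :=
  (∀ X X' Y, L (X + X') Y = L X Y + L X' Y) ∧
  (∀ X Y Y', L X (Y + Y') = L X Y + L X Y') ∧
  (∀ (c : ℝ) (X Y : E₀), L (c • X) Y = c • L X Y) ∧
  (∀ (c : ℝ) (X Y : E₀), L X (c • Y) = c • L X Y) ∧
  (∀ X Y, L Y X = - L X Y) ∧
  (∀ (f : S) (X Y : E₀), L X (f • Y) = anchor X f • Y + f • L X Y) ∧
  (∀ i j k l, L (sb i j) (sb k l) =
    (if j = k then (2 : S) * xc k else 0) • sb i l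
      - (if l = i then (2 : S) * xc i else 0) • sb k j)


/-- The Koszul axioms for an `E₀`-connection on `E₀` (with respect to the anchor `ρ`):
`C^∞(ℝ²)`-linearity in the first argument, additivity in the second argument, and the
Leibniz rule. -/
def IsConn (D : E₀ → E₀ → E₀) : Prop :=
  (∀ X X' Y, D (X + X') Y = D X Y + D X' Y) ∧
  (∀ (f : S) (X Y : E₀), D (f • X) Y = f • D X Y) ∧
  (∀ X Y Y', D X (Y + Y') = D X Y + D X Y') ∧
  (∀ (f : S) (X Y : E₀), D X (f • Y) = anchor X f • Y + f • D X Y)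

/-- The pair of kernel sections `(𝒳₁, 𝒳₂)`. -/
def 𝓧v : Fin 2 → E₀ := ![𝓧₁, 𝓧₂]

/-- The full table of curvature values of the connection `∇_{X_j^i} X_l^k = 2x^k δ_j^k X_l^i`
on generators: the four values listed in the statement, the values forced by
skew-symmetry in the first two arguments, and `0` for all other components. -/
def Rtable (i j k l m n : Fin 2) : E₀ :=
  if i = 0 ∧ j = 0 ∧ k = 1 ∧ l = 0 ∧ m = 0 then (-2 : S) • 𝓧v n
  else if i = 1 ∧ j = 0 ∧ k = 0 ∧ l = 0 ∧ m = 0 then (2 : S) • 𝓧v n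
  else if i = 1 ∧ j = 1 ∧ k = 0 ∧ l = 1 ∧ m = 1 then (2 : S) • 𝓧v n
  else if i = 0 ∧ j = 1 ∧ k = 1 ∧ l = 1 ∧ m = 1 then (-2 : S) • 𝓧v n
  else 0

/-!
The torsion `∇_X Y − ∇_Y X − [X, Y]` is additive in each argument and, by the two Leibniz
rules, `C^∞(ℝ²)`-linear in `Y`; being skew, it is then tensorial, so it vanishes once it
vanishes on the frame `X_j^i`, where it is `0` by the defining formulas. For the curvature
on the frame, the products of the coefficients `2x^k δ_j^k` cancel by commutativity, and only
the derivative `ρ(X_j^i)(2x^m δ_l^m) = 2(x^i)² δ_j^m δ_l^m` of a coefficient survives.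
-/

theorem Matrix.eq_zero_of_map_single_eq_zero {m n R M : Type*} [Fintype m] [Fintype n]
    [DecidableEq m] [DecidableEq n] [Semiring R] [AddCommMonoid M] [Module R M]
    (F : Matrix m n R → M) (map_add : ∀ X Y, F (X + Y) = F X + F Y)
    (map_smul : ∀ (r : R) X, F (r • X) = r • F X) (h : ∀ i j, F (single i j 1) = 0)
    (X : Matrix m n R) : F X = 0 := by
  let φ : Matrix m n R →ₗ[R] M := ⟨⟨F, map_add⟩, map_smul⟩
  change φ X = 0
  rw [matrix_eq_sum_single X]
  simp only [map_sum]
  refine Finset.sum_eq_zero fun i _ => Finset.sum_eq_zero fun j _ => ?_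
  rw [← mul_one (X i j), ← smul_eq_mul, ← smul_single, φ.map_smul]
  exact smul_eq_zero_of_right _ (h i j)

lemma pd_xc (j m : Fin 2) : pd (ev j) (xc m) = if j = m then 1 else 0 := by
  fin_cases j <;> fin_cases m <;> ext p <;>
    simp [pd, pdAux, xc, x₁, x₂, ev, fderiv_fst, fderiv_snd]

lemma pd_ev_two_mul_xc (j l m : Fin 2) :
    pd (ev j) (if l = m then (2 : S) * xc m else 0) = if j = m ∧ l = m then 2 else 0 := by
  have h2 : pd (ev j) (2 : S) = 0 := mod_cast (pd (ev j)).map_natCast 2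
  split_ifs <;> simp_all [Derivation.leibniz, pd_xc]

lemma anchor_sb (i j : Fin 2) (f : S) : anchor (sb i j) f = xc i ^ 2 * pd (ev j) f := by
  fin_cases i <;> fin_cases j <;> simp [anchor, sb, single_apply, Fin.sum_univ_two]

section Torsion

variable {L D : E₀ → E₀ → E₀}

def torsion (D L : E₀ → E₀ → E₀) (X Y : E₀) : E₀ := D X Y - D Y X - L X Y

lemma torsion_add_right (hL : IsBracket L) (hD : IsConn D) (X Y Y' : E₀) :
    torsion D L X (Y + Y') = torsion D L X Y + torsion D L X Y' := by
  simp only [torsion, hD.2.2.1, hD.1, hL.2.1]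
  abel

lemma torsion_smul_right (hL : IsBracket L) (hD : IsConn D) (f : S) (X Y : E₀) :
    torsion D L X (f • Y) = f • torsion D L X Y := by
  simp only [torsion, hD.2.2.2, hD.2.1, hL.2.2.2.2.2.1, smul_sub]
  abel

lemma torsion_swap (hL : IsBracket L) (X Y : E₀) : torsion D L Y X = -torsion D L X Y := by
  rw [torsion, torsion, hL.2.2.2.2.1 X Y]
  abel

lemma torsion_sb_sb (hL : IsBracket L)
    (hDgen : ∀ i j k l, D (sb i j) (sb k l) = (if j = k then (2 : S) * xc k else 0) • sb i l)
    (i j k l : Fin 2) : torsion D L (sb i j) (sb k l) = 0 := by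
  simp only [torsion, hDgen, hL.2.2.2.2.2.2]
  abel

theorem torsion_eq_zero (hL : IsBracket L) (hD : IsConn D)
    (hDgen : ∀ i j k l, D (sb i j) (sb k l) = (if j = k then (2 : S) * xc k else 0) • sb i l)
    (X Y : E₀) : torsion D L X Y = 0 := by
  have torsion_sb_left (i j : Fin 2) (Z : E₀) : torsion D L (sb i j) Z = 0 :=
    Matrix.eq_zero_of_map_single_eq_zero _ (torsion_add_right hL hD _)
      (torsion_smul_right hL hD · _) (torsion_sb_sb hL hDgen i j) Z
  rw [torsion_swap hL, neg_eq_zero]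
  refine Matrix.eq_zero_of_map_single_eq_zero _ (torsion_add_right hL hD _)
    (torsion_smul_right hL hD · _) (fun i j => ?_) X
  rw [torsion_swap hL, neg_eq_zero]
  exact torsion_sb_left i j Y

end Torsion

section Curvature

variable {L D : E₀ → E₀ → E₀}

def curvature (D L : E₀ → E₀ → E₀) (X Y Z : E₀) : E₀ :=
  D X (D Y Z) - D Y (D X Z) - D (L X Y) Z

lemma IsConn.sub_left (hD : IsConn D) (X Y Z : E₀) : D (X - Y) Z = D X Z - D Y Z := by
  rw [eq_sub_iff_add_eq, ← hD.1, sub_add_cancel]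

lemma IsConn.sb_smul_sb (hD : IsConn D)
    (hDgen : ∀ i j k l, D (sb i j) (sb k l) = (if j = k then (2 : S) * xc k else 0) • sb i l)
    (i j k n : Fin 2) (f : S) :
    D (sb i j) (f • sb k n) = (xc i ^ 2 * pd (ev j) f) • sb k n
      + (f * if j = k then (2 : S) * xc k else 0) • sb i n := by
  rw [hD.2.2.2, hDgen, anchor_sb, smul_smul]

theorem curvature_sb (hL : IsBracket L) (hD : IsConn D)
    (hDgen : ∀ i j k l, D (sb i j) (sb k l) = (if j = k then (2 : S) * xc k else 0) • sb i l)
    (i j k l m n : Fin 2) :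
    curvature D L (sb i j) (sb k l) (sb m n)
      = if j = m ∧ l = m then (2 : S) • (xc i ^ 2 • sb k n - xc k ^ 2 • sb i n) else 0 := by
  have expand : curvature D L (sb i j) (sb k l) (sb m n)
      = (xc i ^ 2 * if j = m ∧ l = m then 2 else 0) • sb k n
        - (xc k ^ 2 * if l = m ∧ j = m then 2 else 0) • sb i n := by
    rw [curvature, hDgen k l m n, hDgen i j m n, hD.sb_smul_sb hDgen, hD.sb_smul_sb hDgen,
      hL.2.2.2.2.2.2, hD.sub_left, hD.2.1, hD.2.1, hDgen, hDgen, pd_ev_two_mul_xc,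
      pd_ev_two_mul_xc]
    module
  simp only [expand, and_comm (a := l = m)]
  split_ifs
  · module
  · simp

end Curvature

lemma 𝓧v_eq (n : Fin 2) : 𝓧v n = x₂ ^ 2 • sb 0 n - x₁ ^ 2 • sb 1 n := by
  fin_cases n <;> rfl

lemma Rtable_eq (i j k l m n : Fin 2) :
    Rtable i j k l m n
      = if j = m ∧ l = m then (2 : S) • (xc i ^ 2 • sb k n - xc k ^ 2 • sb i n) else 0 := by
  fin_cases i <;> fin_cases j <;> fin_cases k <;> fin_cases l <;> fin_cases m <;>
    simp [Rtable, 𝓧v_eq, xc] <;> module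

/-- the connection `∇` defined on generators by
`∇_{X_j^i} X_l^k = 2x^k δ_j^k X_l^i` (extended by the Koszul rules) is torsion-free with
respect to `[·,·]_{E₀}`, and its curvature takes on generators exactly the values
`R(X₁¹,X₁²)X₁¹ = −2𝒳₁`, `R(X₁¹,X₁²)X₂¹ = −2𝒳₂`, `R(X₂²,X₂¹)X₁² = 2𝒳₁`,
`R(X₂²,X₂¹)X₂² = 2𝒳₂`, together with the values forced by skew-symmetry in the first two
arguments, all other components being zero. -/
theorem statement12 (L : E₀ → E₀ → E₀) (hL : IsBracket L)
    (D : E₀ → E₀ → E₀) (hD : IsConn D)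
    (hDgen : ∀ i j k l, D (sb i j) (sb k l) = (if j = k then (2 : S) * xc k else 0) • sb i l) :
    (∀ X Y : E₀, D X Y - D Y X = L X Y) ∧
    (∀ i j k l m n : Fin 2,
      D (sb i j) (D (sb k l) (sb m n)) - D (sb k l) (D (sb i j) (sb m n))
        - D (L (sb i j) (sb k l)) (sb m n) = Rtable i j k l m n) :=
  ⟨fun X Y => sub_eq_zero.mp (torsion_eq_zero hL hD hDgen X Y),
    fun i j k l m n => (curvature_sb hL hD hDgen i j k l m n).trans (Rtable_eq i j k l m n).symm⟩
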